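/- Let α, β, γ, t be integers with 1 ≤ α ≤ β ≤ γ < 2(α+β), with α+β+γ divisible by 3, and with t > (α+β+γ)/3. Set σ = α+β+γ, s = (2/3)σ + t − 2, and e = σ + 2t − 3, and for d ∈ ℕ let h(d) be the number of triples (a,b,c) ∈ ℕ³ with a+b+c = d, a < α+t, b < β+t, c < γ+t, and not (a ≥ α and b ≥ β and c ≥ γ). Then h is peaked strictly unimodal with exactly two peaks, in degrees s and s+1: h(d) < h(d+1) for 0 ≤ d < s; h(s) = h(s+1); h(d) > h(d+1) for s+1 ≤ d < e; h(e) = 3; and h(d) = 0 for d > e. -/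

import Mathlib

open Finset

/-- The Hilbert function of `R/I` where
`I = (x^{α+t}, y^{β+t}, z^{γ+t}, x^α y^β z^γ) ⊂ K[x,y,z]`:
`hilb α β γ t d` is the number of triples `(a,b,c) ∈ ℕ³` with `a+b+c = d`,
`a < α+t`, `b < β+t`, `c < γ+t`, and not (`a ≥ α` and `b ≥ β` and `c ≥ γ`). -/
def hilb (α β γ t d : ℕ) : ℕ :=
  ((Finset.range (α + t) ×ˢ Finset.range (β + t) ×ˢ Finset.range (γ + t)).filter
    (fun p => p.1 + p.2.1 + p.2.2 = d ∧ ¬(α ≤ p.1 ∧ β ≤ p.2.1 ∧ γ ≤ p.2.2))).card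

/-- Number of pairs `(a,b)` with `a < A`, `b < B`, `a + b = d`. -/
def cnt2 (A B d : ℕ) : ℕ :=
  ((Finset.range A ×ˢ Finset.range B).filter (fun p => p.1 + p.2 = d)).card

/-- Number of triples `(a,b,c)` with `a < A`, `b < B`, `c < C`, `a + b + c = d`. -/
def cnt3 (A B C d : ℕ) : ℕ :=
  ((Finset.range A ×ˢ Finset.range B ×ˢ Finset.range C).filter
    (fun p => p.1 + p.2.1 + p.2.2 = d)).card

lemma cnt2_eq (A B d : ℕ) : cnt2 A B d = min A (d + 1) - (d + 1 - B) := by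
  rw [cnt2]
  rw [show ((Finset.range A ×ˢ Finset.range B).filter (fun p => p.1 + p.2 = d)).card
      = (Finset.Ico (d + 1 - B) (min A (d + 1))).card from ?_]
  · rw [Nat.card_Ico]
  · apply Finset.card_nbij' (fun p => p.1) (fun a => (a, d - a))
    · intro p hp
      simp only [Finset.mem_coe, Finset.mem_filter, Finset.mem_product, Finset.mem_range] at hp
      simp only [Finset.mem_coe, Finset.mem_Ico]
      omega
    · intro a ha
      simp only [Finset.mem_coe, Finset.mem_Ico] at ha
      simp only [Finset.mem_coe, Finset.mem_filter, Finset.mem_product, Finset.mem_range]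
      omega
    · intro p hp
      simp only [Finset.mem_coe, Finset.mem_filter, Finset.mem_product, Finset.mem_range] at hp
      have : d - p.1 = p.2 := by omega
      simp [this]
    · intro a _; rfl

lemma cnt3_fiber (A B C d c : ℕ) (hc : c < C) :
    (((Finset.range A ×ˢ Finset.range B ×ˢ Finset.range C).filter
      (fun p => p.1 + p.2.1 + p.2.2 = d)).filter (fun p => p.2.2 = c)).card
      = if c ≤ d then cnt2 A B (d - c) else 0 := by
  split_ifs with h
  · rw [cnt2]
    apply Finset.card_nbij' (fun p => (p.1, p.2.1)) (fun q => (q.1, q.2, c))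
    · intro p hp
      simp only [Finset.mem_coe, Finset.mem_filter, Finset.mem_product, Finset.mem_range] at hp ⊢
      omega
    · intro q hq
      simp only [Finset.mem_coe, Finset.mem_filter, Finset.mem_product, Finset.mem_range, and_true] at hq ⊢
      omega
    · intro p hp
      simp only [Finset.mem_coe, Finset.mem_filter, Finset.mem_product, Finset.mem_range] at hp
      obtain ⟨⟨-, h2⟩, h3⟩ := hp
      ext <;> simp [h3]
    · intro q _; rfl
  · rw [Finset.card_eq_zero, Finset.filter_eq_empty_iff]
    intro p hp
    simp only [Finset.mem_filter, Finset.mem_product, Finset.mem_range] at hp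
    omega

lemma cnt3_eq_sum (A B C d : ℕ) :
    cnt3 A B C d = ∑ c ∈ Finset.range C, if c ≤ d then cnt2 A B (d - c) else 0 := by
  rw [cnt3, Finset.card_eq_sum_card_fiberwise (f := fun p => p.2.2) (t := Finset.range C)
    (by intro p hp; simp only [Finset.mem_coe, Finset.mem_filter, Finset.mem_product] at hp; exact hp.1.2.2)]
  exact Finset.sum_congr rfl fun c hc => cnt3_fiber A B C d c (Finset.mem_range.mp hc)

lemma cnt3_diff (A B C d : ℕ) :
    (cnt3 A B C (d + 1) : ℤ) = cnt3 A B C d + cnt2 A B (d + 1)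
      - (if C ≤ d + 1 then (cnt2 A B (d + 1 - C) : ℤ) else 0) := by
  obtain rfl | ⟨C, rfl⟩ : C = 0 ∨ ∃ C', C = C' + 1 := by rcases C with _ | C <;> simp
  · simp [cnt3_eq_sum]
  · rw [cnt3_eq_sum, cnt3_eq_sum, Finset.sum_range_succ' _ C, Finset.sum_range_succ _ C]
    have h1 : ∀ c, (if c + 1 ≤ d + 1 then cnt2 A B (d + 1 - (c + 1)) else 0)
        = (if c ≤ d then cnt2 A B (d - c) else 0) := by
      intro c
      have : d + 1 - (c + 1) = d - c := by omega
      rw [this]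
      split_ifs with h h' h' <;> omega
    simp only [h1]
    have h2 : (if (0:ℕ) ≤ d + 1 then cnt2 A B (d + 1 - 0) else 0) = cnt2 A B (d + 1) := by simp
    rw [h2]
    have h3 : (if C + 1 ≤ d + 1 then (cnt2 A B (d + 1 - (C + 1)) : ℤ) else 0)
        = (if C ≤ d then (cnt2 A B (d - C) : ℤ) else 0) := by
      have : d + 1 - (C + 1) = d - C := by omega
      rw [this]
      split_ifs with h h' h' <;> omega
    rw [h3]
    push_cast
    split_ifs <;> ring

lemma corner_card (α β γ t d : ℕ) :
    (((Finset.range (α + t) ×ˢ Finset.range (β + t) ×ˢ Finset.range (γ + t)).filter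
        (fun p => p.1 + p.2.1 + p.2.2 = d)).filter
      (fun p => α ≤ p.1 ∧ β ≤ p.2.1 ∧ γ ≤ p.2.2)).card
      = if α + β + γ ≤ d then cnt3 t t t (d - (α + β + γ)) else 0 := by
  split_ifs with h
  · rw [cnt3]
    apply Finset.card_nbij' (fun p => (p.1 - α, p.2.1 - β, p.2.2 - γ))
      (fun q => (q.1 + α, q.2.1 + β, q.2.2 + γ))
    · intro p hp
      simp only [Finset.mem_coe, Finset.mem_filter, Finset.mem_product, Finset.mem_range] at hp ⊢
      omega
    · intro q hq
      simp only [Finset.mem_coe, Finset.mem_filter, Finset.mem_product, Finset.mem_range, and_true] at hq ⊢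
      omega
    · intro p hp
      simp only [Finset.mem_coe, Finset.mem_filter, Finset.mem_product, Finset.mem_range] at hp
      obtain ⟨-, h1, h2, h3⟩ := hp
      ext <;> simp <;> omega
    · intro q hq
      simp only [Finset.mem_coe, Finset.mem_filter, Finset.mem_product, Finset.mem_range] at hq
      ext <;> simp
  · rw [Finset.card_eq_zero, Finset.filter_eq_empty_iff]
    intro p hp
    simp only [Finset.mem_filter, Finset.mem_product, Finset.mem_range] at hp
    omega

lemma hilb_split (α β γ t d : ℕ) :
    hilb α β γ t d
      + (if α + β + γ ≤ d then cnt3 t t t (d - (α + β + γ)) else 0)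
      = cnt3 (α + t) (β + t) (γ + t) d := by
  rw [hilb, ← corner_card α β γ t d, cnt3]
  have hf : (Finset.range (α + t) ×ˢ Finset.range (β + t) ×ˢ Finset.range (γ + t)).filter
      (fun p => p.1 + p.2.1 + p.2.2 = d ∧ ¬(α ≤ p.1 ∧ β ≤ p.2.1 ∧ γ ≤ p.2.2))
      = ((Finset.range (α + t) ×ˢ Finset.range (β + t) ×ˢ Finset.range (γ + t)).filter
        (fun p => p.1 + p.2.1 + p.2.2 = d)).filter
        (fun p => ¬(α ≤ p.1 ∧ β ≤ p.2.1 ∧ γ ≤ p.2.2)) := by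
    rw [Finset.filter_filter]
  rw [hf, add_comm]
  exact Finset.card_filter_add_card_filter_not _

lemma cnt3_zero (t : ℕ) (h1 : 1 ≤ t) : cnt3 t t t 0 = 1 := by
  obtain ⟨t', rfl⟩ : ∃ t', t = t' + 1 := ⟨t - 1, by omega⟩
  rw [cnt3_eq_sum, Finset.sum_range_succ']
  simp [cnt2_eq]

lemma hilb_diff (α β γ t d : ℕ) (ht1 : 1 ≤ t) :
    (hilb α β γ t (d + 1) : ℤ) - hilb α β γ t d
      = (cnt2 (α + t) (β + t) (d + 1) : ℤ)
        - (if γ + t ≤ d + 1 then (cnt2 (α + t) (β + t) (d + 1 - (γ + t)) : ℤ) else 0)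
        - (if α + β + γ ≤ d + 1 then (cnt2 t t (d + 1 - (α + β + γ)) : ℤ) else 0)
        + (if α + β + γ + t ≤ d + 1 then (cnt2 t t (d + 1 - (α + β + γ) - t) : ℤ) else 0) := by
  have H1 := hilb_split α β γ t d
  have H2 := hilb_split α β γ t (d + 1)
  have H3 := cnt3_diff (α + t) (β + t) (γ + t) d
  rcases le_or_gt (α + β + γ) d with hc | hc
  · have H4 := cnt3_diff t t t (d - (α + β + γ))
    have e1 : d - (α + β + γ) + 1 = d + 1 - (α + β + γ) := by omega
    rw [e1] at H4
    rw [if_pos hc] at H1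
    rw [if_pos (by omega : α + β + γ ≤ d + 1)] at H2
    rw [if_pos (by omega : α + β + γ ≤ d + 1)]
    have e3 : (if t ≤ d + 1 - (α + β + γ) then (cnt2 t t (d + 1 - (α + β + γ) - t) : ℤ) else 0)
        = (if α + β + γ + t ≤ d + 1 then (cnt2 t t (d + 1 - (α + β + γ) - t) : ℤ) else 0) := by
      split_ifs with h1 h2 <;> first | rfl | omega
    rw [e3] at H4
    split_ifs at H3 ⊢ <;> omega
  · by_cases hd1 : α + β + γ = d + 1
    · rw [if_neg (by omega)] at H1
      rw [if_pos (by omega)] at H2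
      have e0 : d + 1 - (α + β + γ) = 0 := by omega
      rw [e0] at H2
      rw [cnt3_zero t ht1] at H2
      have hc2 : cnt2 t t 0 = 1 := by rw [cnt2_eq]; omega
      rw [if_pos (by omega : α + β + γ ≤ d + 1), if_neg (by omega : ¬(α + β + γ + t ≤ d + 1)),
        e0, hc2]
      split_ifs at H3 ⊢ <;> omega
    · rw [if_neg (by omega)] at H1
      rw [if_neg (by omega)] at H2
      rw [if_neg (by omega : ¬(α + β + γ ≤ d + 1)),
        if_neg (by omega : ¬(α + β + γ + t ≤ d + 1))]
      split_ifs at H3 ⊢ <;> omega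

lemma hilb_key (α β γ t d : ℕ) (ht1 : 1 ≤ t) :
    (hilb α β γ t (d + 1) : ℤ) - hilb α β γ t d
      = ((min (α + t) (d + 1 + 1) - (d + 1 + 1 - (β + t)) : ℕ) : ℤ)
        - (if γ + t ≤ d + 1
            then ((min (α + t) (d + 1 - (γ + t) + 1) - (d + 1 - (γ + t) + 1 - (β + t)) : ℕ) : ℤ)
            else 0)
        - (if α + β + γ ≤ d + 1
            then ((min t (d + 1 - (α + β + γ) + 1) - (d + 1 - (α + β + γ) + 1 - t) : ℕ) : ℤ)
            else 0)
        + (if α + β + γ + t ≤ d + 1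
            then ((min t (d + 1 - (α + β + γ) - t + 1) - (d + 1 - (α + β + γ) - t + 1 - t) : ℕ) : ℤ)
            else 0) := by
  have k := hilb_diff α β γ t d ht1
  simp only [cnt2_eq] at k
  exact k

lemma hilb_inc (α β γ t s d : ℕ)
    (hα : 1 ≤ α) (hαβ : α ≤ β) (hβγ : β ≤ γ) (hγ : γ < 2 * (α + β))
    (h3 : 3 ∣ (α + β + γ)) (ht : α + β + γ < 3 * t)
    (hs : 3 * (s + 2) = 2 * (α + β + γ) + 3 * t) (hd : d < s) :
    hilb α β γ t d < hilb α β γ t (d + 1) := by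
  have k := hilb_key α β γ t d (by omega)
  split_ifs at k <;> omega

lemma hilb_eq_peak (α β γ t s : ℕ)
    (hα : 1 ≤ α) (hαβ : α ≤ β) (hβγ : β ≤ γ) (hγ : γ < 2 * (α + β))
    (h3 : 3 ∣ (α + β + γ)) (ht : α + β + γ < 3 * t)
    (hs : 3 * (s + 2) = 2 * (α + β + γ) + 3 * t) :
    hilb α β γ t s = hilb α β γ t (s + 1) := by
  have k := hilb_key α β γ t s (by omega)
  split_ifs at k <;> omega

set_option maxHeartbeats 3000000 in
lemma hilb_dec (α β γ t s e d : ℕ)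
    (hα : 1 ≤ α) (hαβ : α ≤ β) (hβγ : β ≤ γ) (hγ : γ < 2 * (α + β))
    (h3 : 3 ∣ (α + β + γ)) (ht : α + β + γ < 3 * t)
    (hs : 3 * (s + 2) = 2 * (α + β + γ) + 3 * t)
    (he : e + 3 = α + β + γ + 2 * t)
    (hd1 : s + 1 ≤ d) (hd2 : d < e) :
    hilb α β γ t d > hilb α β γ t (d + 1) := by
  have k := hilb_key α β γ t d (by omega)
  have hd1' : 3 * d ≥ 2 * (α + β + γ) + 3 * t - 3 := by omega
  clear h3 hs hd1
  split_ifs at k <;> omega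

lemma hilb_socle (α β γ t e : ℕ)
    (hα : 1 ≤ α) (hαβ : α ≤ β) (hβγ : β ≤ γ) (ht : α + β + γ < 3 * t)
    (he : e + 3 = α + β + γ + 2 * t) :
    hilb α β γ t e = 3 := by
  have hset : (Finset.range (α + t) ×ˢ Finset.range (β + t) ×ˢ Finset.range (γ + t)).filter
      (fun p => p.1 + p.2.1 + p.2.2 = e ∧ ¬(α ≤ p.1 ∧ β ≤ p.2.1 ∧ γ ≤ p.2.2))
      = {(α - 1, β + t - 1, γ + t - 1), (α + t - 1, β - 1, γ + t - 1),
          (α + t - 1, β + t - 1, γ - 1)} := by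
    ext ⟨a, b, c⟩
    simp only [Finset.mem_filter, Finset.mem_product, Finset.mem_range, Finset.mem_insert,
      Finset.mem_singleton, Prod.mk.injEq]
    omega
  rw [hilb, hset]
  rw [Finset.card_insert_of_notMem (by
      simp only [Finset.mem_insert, Finset.mem_singleton, Prod.mk.injEq, not_or]
      constructor <;> intro h <;> omega),
    Finset.card_insert_of_notMem (by
      simp only [Finset.mem_singleton, Prod.mk.injEq]
      intro h; omega),
    Finset.card_singleton]

lemma hilb_vanish (α β γ t e d : ℕ)
    (he : e + 3 = α + β + γ + 2 * t) (hd : e < d) :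
    hilb α β γ t d = 0 := by
  rw [hilb, Finset.card_eq_zero, Finset.filter_eq_empty_iff]
  intro p hp
  simp only [Finset.mem_product, Finset.mem_range] at hp
  omega

/-- The Hilbert function is peaked strictly unimodal with exactly two peaks in
degrees `s` and `s+1`, where `s = (2/3)(α+β+γ) + t - 2` is encoded by
`3(s+2) = 2(α+β+γ) + 3t` and the socle degree `e = α+β+γ+2t-3` is encoded by
`e + 3 = α+β+γ+2t`: it strictly increases up to degree `s`, has
`h(s) = h(s+1)`, strictly decreases from degree `s+1` to degree `e`, takes the
value `3` in degree `e`, and vanishes beyond `e`. -/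
theorem hilb_peaked_strictly_unimodal_two_peaks (α β γ t s e : ℕ)
    (hα : 1 ≤ α) (hαβ : α ≤ β) (hβγ : β ≤ γ) (hγ : γ < 2 * (α + β))
    (h3 : 3 ∣ (α + β + γ)) (ht : α + β + γ < 3 * t)
    (hs : 3 * (s + 2) = 2 * (α + β + γ) + 3 * t)
    (he : e + 3 = α + β + γ + 2 * t) :
    (∀ d : ℕ, d < s → hilb α β γ t d < hilb α β γ t (d + 1)) ∧
    hilb α β γ t s = hilb α β γ t (s + 1) ∧
    (∀ d : ℕ, s + 1 ≤ d → d < e → hilb α β γ t d > hilb α β γ t (d + 1)) ∧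
    hilb α β γ t e = 3 ∧
    (∀ d : ℕ, e < d → hilb α β γ t d = 0) :=
  ⟨fun d hd => hilb_inc α β γ t s d hα hαβ hβγ hγ h3 ht hs hd,
   hilb_eq_peak α β γ t s hα hαβ hβγ hγ h3 ht hs,
   fun d hd1 hd2 => hilb_dec α β γ t s e d hα hαβ hβγ hγ h3 ht hs he hd1 hd2,
   hilb_socle α β γ t e hα hαβ hβγ ht he,
   fun d hd => hilb_vanish α β γ t e d he hd⟩
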